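/- Let K be a valued field with a tower of complements (A[Λ]), and let a ∈ K with v(a) = 0 and a ≠ 0. Set Λ := ℤ·μ(a) := sup_n n·μ(a). Then μ(1/a) ≤ Λ, i.e., 1/a ∈ A[Λ]. -/

import Mathlib

set_option autoImplicit false

universe u v

/-- A Dedekind cut of a linearly ordered abelian group, represented by its left part
(`L = Λ^L`); the right part is the complement of `L`.  The cuts `-∞` (`L = ∅`) and
`+∞` (`L = G`) are included. -/
structure Cut (G : Type u) [AddCommGroup G] [LinearOrder G] [IsOrderedAddMonoid G] : Type u where
  L : Set G
  lower : ∀ ⦃x y : G⦄, y ∈ L → x ≤ y → x ∈ L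

namespace Cut

variable {G : Type u} [AddCommGroup G] [LinearOrder G] [IsOrderedAddMonoid G]

/-- Cuts are ordered by inclusion of left parts. -/
instance : PartialOrder (Cut G) where
  le Λ Γ := Λ.L ⊆ Γ.L
  le_refl _ := subset_rfl
  le_trans _ _ _ h h' := fun x hx => h' (h hx)
  le_antisymm := by
    rintro ⟨L₁, h₁⟩ ⟨L₂, h₂⟩ h h'
    simpa using Set.Subset.antisymm h h'

/-- `γ⁻`, the cut with left part `(-∞, γ)`. -/
def lcut (γ : G) : Cut G := ⟨{x | x < γ}, fun _ _ hy hxy => lt_of_le_of_lt hxy hy⟩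

/-- `γ⁺`, the cut with left part `(-∞, γ]`. -/
def rcut (γ : G) : Cut G := ⟨{x | x ≤ γ}, fun _ _ hy hxy => le_trans hxy hy⟩

/-- The left sum of cuts: the smallest cut whose left part contains all `λ + γ`
with `λ < Λ`, `γ < Γ`. -/
instance : Add (Cut G) :=
  ⟨fun Λ Γ => ⟨{x | ∃ l ∈ Λ.L, ∃ g ∈ Γ.L, x ≤ l + g}, by
    rintro x y ⟨l, hl, g, hg, hy⟩ hxy
    exact ⟨l, hl, g, hg, hxy.trans hy⟩⟩⟩

/-- The right sum of cuts: the largest cut whose right part contains all `λ + γ`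
with `λ > Λ`, `γ > Γ`. -/
def addR (Λ Γ : Cut G) : Cut G :=
  ⟨{x | ∀ l ∉ Λ.L, ∀ g ∉ Γ.L, x < l + g}, by
    intro x y hy hxy l hl g hg
    exact lt_of_le_of_lt hxy (hy l hl g hg)⟩

/-- The right difference of cuts: the largest cut whose right part contains all
`λ − γ` with `λ > Λ`, `γ < Γ`. -/
def sub (Λ Γ : Cut G) : Cut G :=
  ⟨{x | ∀ l ∉ Λ.L, ∀ g ∈ Γ.L, x < l - g}, by
    intro x y hy hxy l hl g hg
    exact lt_of_le_of_lt hxy (hy l hl g hg)⟩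

/-- Translation `γ + Λ` of a cut by a group element, with left part `{γ + λ : λ ∈ Λ^L}`. -/
def transl (γ : G) (Λ : Cut G) : Cut G :=
  ⟨(fun x => γ + x) '' Λ.L, by
    rintro x y ⟨l, hl, rfl⟩ hxy
    exact ⟨x - γ, Λ.lower hl (sub_le_iff_le_add'.mpr hxy), by show γ + (x - γ) = x; rw [add_comm, sub_add_cancel]⟩⟩

/-- Negation of a cut: `-Λ = (-Λ^R, -Λ^L)`. -/
def neg (Λ : Cut G) : Cut G :=
  ⟨{x | -x ∉ Λ.L}, by
    intro x y hy hxy hx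
    exact hy (Λ.lower hx (neg_le_neg hxy))⟩

/-- The `n`-fold left sum `Λ + Γ + ⋯ + Γ` (`Γ` added `n` times). -/
def addn (Λ Γ : Cut G) : ℕ → Cut G
  | 0 => Λ
  | n + 1 => addn Λ Γ n + Γ

/-- The `n`-fold right difference `Λ − Γ − ⋯ − Γ` (`Γ` subtracted `n` times). -/
def subn (Λ Γ : Cut G) : ℕ → Cut G
  | 0 => Λ
  | n + 1 => (subn Λ Γ n).sub Γ

/-- `nΓ = Γ + ⋯ + Γ` (`n` times); by convention `0 • Γ = 0⁺`, the neutral element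
of the left sum. -/
def nsmul : ℕ → Cut G → Cut G
  | 0, _ => rcut 0
  | 1, Γ => Γ
  | n + 2, Γ => nsmul (n + 1) Γ + Γ

/-- `ℤ`-multiples of a cut: `(-n)Γ := -(nΓ)`. -/
def zsmul (n : ℤ) (Γ : Cut G) : Cut G :=
  if 0 ≤ n then nsmul n.toNat Γ else (nsmul (-n).toNat Γ).neg

/-- `ℤΓ := sup {nΓ : n ∈ ℤ}`. -/
def zmul (Γ : Cut G) : Cut G :=
  ⟨⋃ n : ℤ, (zsmul n Γ).L, by
    intro x y hy hxy
    rcases Set.mem_iUnion.1 hy with ⟨n, hn⟩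
    exact Set.mem_iUnion.2 ⟨n, (zsmul n Γ).lower hn hxy⟩⟩

/-- `S⁺`: the smallest cut whose left part contains the set `S`. -/
def ofSet (s : Set G) : Cut G :=
  ⟨{x | ∃ γ ∈ s, x ≤ γ}, by
    rintro x y ⟨γ, hγ, hy⟩ hxy
    exact ⟨γ, hγ, hxy.trans hy⟩⟩

/-- The supremum (maximum) of two cuts. -/
def max (Λ Γ : Cut G) : Cut G :=
  ⟨Λ.L ∪ Γ.L, by
    rintro x y (hy | hy) hxy
    · exact Or.inl (Λ.lower hy hxy)
    · exact Or.inr (Γ.lower hy hxy)⟩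

/-- The infimum of a set of cuts. -/
def inf (s : Set (Cut G)) : Cut G :=
  ⟨{x | ∀ Λ ∈ s, x ∈ Λ.L}, by
    intro x y hy hxy Λ hΛ
    exact Λ.lower (hy Λ hΛ) hxy⟩

end Cut

/-- A valued field `K` (of equal characteristic) with value group `G`, a value group
section `t`, and an embedded residue field `k ⊆ K` (the residue field section is the
inclusion). The valuation is written additively, with `v 0 = ⊤`. -/
structure VData (K : Type u) (G : Type v) [Field K] [AddCommGroup G] [LinearOrder G] [IsOrderedAddMonoid G] where
  v : K → WithTop G
  k : Subfield K
  t : G → K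
  v_eq_top : ∀ x : K, v x = ⊤ ↔ x = 0
  v_mul : ∀ x y : K, v (x * y) = v x + v y
  v_sub : ∀ x y : K, min (v x) (v y) ≤ v (x - y)
  v_surj : ∀ γ : G, ∃ x : K, v x = (γ : WithTop G)
  v_t : ∀ γ : G, v (t γ) = (γ : WithTop G)
  t_neg : ∀ γ : G, t (-γ) = (t γ)⁻¹
  v_k : ∀ c ∈ k, c ≠ 0 → v c = (0 : WithTop G)
  k_res : ∀ x : K, v x = (0 : WithTop G) → ∃ c ∈ k, (0 : WithTop G) < v (x - c)

namespace VData

variable {K : Type u} {G : Type v} [Field K] [AddCommGroup G] [LinearOrder G] [IsOrderedAddMonoid G]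

/-- `O[Λ] = {x ∈ K : v(x) > Λ}`, the (possibly fractional) ideal of the valuation
ring associated with the cut `Λ`. -/
def Oc (S : VData K G) (Λ : Cut G) : Set K :=
  {x | ∀ γ : G, S.v x = (γ : WithTop G) → γ ∉ Λ.L}

/-- `O_R[Λ] = {x ∈ R : v(x) > Λ}`, for a subring `R` of `K`. -/
def OcR (S : VData K G) (R : Subring K) (Λ : Cut G) : Set K :=
  {x | x ∈ R ∧ ∀ γ : G, S.v x = (γ : WithTop G) → γ ∉ Λ.L}

end VData

/-- Axioms CA–CD of a (weak) tower of complements for the valued field `K`: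
each `A[Λ]` is a `k`-subspace of `K` (CA), `A[Λ] ⊕ O[Λ] = K` (CB),
`t(γ)·k ⊆ A[γ⁺]` (CC), and `Γ ≤ Λ ↔ A[Γ] ⊆ A[Λ]` (CD). -/
structure TowerBase {K : Type u} {G : Type v} [Field K] [AddCommGroup G] [LinearOrder G] [IsOrderedAddMonoid G]
    (S : VData K G) where
  A : Cut G → Set K
  zero_mem : ∀ Λ : Cut G, (0 : K) ∈ A Λ
  add_mem : ∀ Λ : Cut G, ∀ x ∈ A Λ, ∀ y ∈ A Λ, x + y ∈ A Λ
  smul_mem : ∀ Λ : Cut G, ∀ c ∈ S.k, ∀ x ∈ A Λ, c * x ∈ A Λ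
  disj : ∀ Λ : Cut G, ∀ x ∈ A Λ, x ∈ S.Oc Λ → x = 0
  spans : ∀ Λ : Cut G, ∀ x : K, ∃ a ∈ A Λ, ∃ o ∈ S.Oc Λ, x = a + o
  sec_mem : ∀ γ : G, ∀ c ∈ S.k, c * S.t γ ∈ A (Cut.rcut γ)
  mono : ∀ Γ Λ : Cut G, Γ ≤ Λ ↔ A Γ ⊆ A Λ

/-- A weak tower of complements: CA–CD together with CF (`A[γ+Λ] = t(γ)·A[Λ]`). -/
structure WeakTower {K : Type u} {G : Type v} [Field K] [AddCommGroup G] [LinearOrder G] [IsOrderedAddMonoid G]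
    (S : VData K G) extends TowerBase S where
  transl_eq : ∀ (γ : G) (Λ : Cut G),
    A (Cut.transl γ Λ) = (fun x => S.t γ * x) '' A Λ

/-- A tower of complements: CA–CD together with the multiplicativity axiom CE
(`A[Λ]·A[Γ] ⊆ A[Λ+Γ]`). -/
structure Tower {K : Type u} {G : Type v} [Field K] [AddCommGroup G] [LinearOrder G] [IsOrderedAddMonoid G]
    (S : VData K G) extends TowerBase S where
  mul_mem : ∀ Λ Γ : Cut G, ∀ x ∈ A Λ, ∀ y ∈ A Γ, x * y ∈ A (Λ + Γ)

/-- Axioms CA–CD of a (weak) tower of complements for a subring `R` of `K`. -/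
structure RTowerBase {K : Type u} {G : Type v} [Field K] [AddCommGroup G] [LinearOrder G] [IsOrderedAddMonoid G]
    (S : VData K G) (R : Subring K) where
  A : Cut G → Set K
  subset_R : ∀ Λ : Cut G, A Λ ⊆ (R : Set K)
  zero_mem : ∀ Λ : Cut G, (0 : K) ∈ A Λ
  add_mem : ∀ Λ : Cut G, ∀ x ∈ A Λ, ∀ y ∈ A Λ, x + y ∈ A Λ
  smul_mem : ∀ Λ : Cut G, ∀ c ∈ S.k, ∀ x ∈ A Λ, c * x ∈ A Λ
  disj : ∀ Λ : Cut G, ∀ x ∈ A Λ, x ∈ S.OcR R Λ → x = 0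
  spans : ∀ Λ : Cut G, ∀ x ∈ R, ∃ a ∈ A Λ, ∃ o ∈ S.OcR R Λ, x = a + o
  sec_mem : ∀ γ : G, ∀ c ∈ S.k, c * S.t γ ∈ A (Cut.rcut γ)
  mono : ∀ Γ Λ : Cut G, Γ ≤ Λ ↔ A Γ ⊆ A Λ

/-- A weak tower of complements for a subring `R` of `K`: CA–CD together with CF. -/
structure RWeakTower {K : Type u} {G : Type v} [Field K] [AddCommGroup G] [LinearOrder G] [IsOrderedAddMonoid G]
    (S : VData K G) (R : Subring K) extends RTowerBase S R where
  transl_eq : ∀ (γ : G) (Λ : Cut G),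
    A (Cut.transl γ Λ) = (fun x => S.t γ * x) '' A Λ

namespace RTowerBase

variable {K : Type u} {G : Type v} [Field K] [AddCommGroup G] [LinearOrder G] [IsOrderedAddMonoid G]
  {S : VData K G} {R : Subring K}

/-- The support of `x ∈ R` with respect to a (weak) tower of complements:
`γ ∈ supp x` iff the coefficient `a_γ(x)` in the decomposition
`x = x₁ + a_γ(x) t(γ) + x₃` (with `x₁ ∈ A[γ⁻]`, `v(x₃) > γ`) is nonzero, i.e.
iff `x ∉ A[γ⁻] + O[γ⁺]`. -/
def supp (T : RTowerBase S R) (x : K) : Set G :=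
  {γ | ¬ ∃ a ∈ T.A (Cut.lcut γ), ∃ o ∈ S.OcR R (Cut.rcut γ), x = a + o}

/-- `μ(x) := (supp x)⁺`, the smallest cut whose left part contains the support. -/
def mu (T : RTowerBase S R) (x : K) : Cut G :=
  Cut.ofSet (T.supp x)

end RTowerBase

namespace TowerBase

variable {K : Type u} {G : Type v} [Field K] [AddCommGroup G] [LinearOrder G] [IsOrderedAddMonoid G]
  {S : VData K G}

/-- `μ(x) := inf {Λ : x ∈ A[Λ]}`. -/
def muInf (T : TowerBase S) (x : K) : Cut G :=
  Cut.inf {Λ | x ∈ T.A Λ}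

end TowerBase

namespace RTowerBase

variable {K : Type u} {G : Type v} [Field K] [AddCommGroup G] [LinearOrder G] [IsOrderedAddMonoid G]
  {S : VData K G} {R : Subring K}

/-- `μ(x) := inf {Λ : x ∈ A[Λ]}`. -/
def muInf (T : RTowerBase S R) (x : K) : Cut G :=
  Cut.inf {Λ | x ∈ T.A Λ}

end RTowerBase

/-! Since `v a = 0`, the cut `Λ := ℤ·μ(a)` contains `0⁺`, so `1 ∈ A[Λ]`, and
`μ(a) + Λ ≤ Λ`, so multiplication by `a ∈ A[μ(a)]` maps `A[Λ]` into itself.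
Write `a⁻¹ = b + ε` with `b ∈ A[Λ]` and `ε ∈ O[Λ]`. Then `a ε = 1 - a b` lies in
`A[Λ]`, and it lies in `O[Λ]` because `v (a ε) = v ε`; hence `a ε = 0`, so `ε = 0`. -/

namespace Cut

variable {G : Type u} [AddCommGroup G] [LinearOrder G] [IsOrderedAddMonoid G]

theorem rcut_le_of_mem {Λ : Cut G} {γ : G} (h : γ ∈ Λ.L) : rcut γ ≤ Λ :=
  fun _ hx => Λ.lower h hx

theorem inf_le {s : Set (Cut G)} {Λ : Cut G} (h : Λ ∈ s) : inf s ≤ Λ :=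
  fun _ hx => hx Λ h

theorem zsmul_natCast (n : ℕ) (Λ : Cut G) : zsmul n Λ = nsmul n Λ := by
  simp [zsmul]

theorem zero_mem_nsmul {Λ : Cut G} (h : (0 : G) ∈ Λ.L) : ∀ n : ℕ, (0 : G) ∈ (nsmul n Λ).L
  | 0 => le_refl (0 : G)
  | 1 => h
  | n + 2 => ⟨0, zero_mem_nsmul h (n + 1), 0, h, (add_zero 0).ge⟩

theorem nonpos_of_mem_zsmul {Λ : Cut G} (h : (0 : G) ∈ Λ.L) {n : ℤ} (hn : n ≤ 0) {g : G}
    (hg : g ∈ (zsmul n Λ).L) : g ≤ 0 := by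
  rcases hn.lt_or_eq with hn | rfl
  · rw [zsmul, if_neg hn.not_ge] at hg
    by_contra! hg0
    exact hg ((nsmul (-n).toNat Λ).lower (zero_mem_nsmul h _) (neg_nonpos.2 hg0.le))
  · exact hg

theorem le_zmul (Λ : Cut G) : Λ ≤ zmul Λ :=
  fun _ hx => Set.mem_iUnion.2 ⟨1, by simpa [zsmul, nsmul] using hx⟩

theorem add_zmul_le {Λ : Cut G} (h : (0 : G) ∈ Λ.L) : Λ + zmul Λ ≤ zmul Λ := by
  rintro z ⟨l, hl, g, hg, hz⟩
  obtain ⟨n, hn⟩ := Set.mem_iUnion.1 hg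
  rcases le_or_gt n 0 with hn0 | hn0
  · exact le_zmul Λ (Λ.lower hl (hz.trans (add_le_of_nonpos_right (nonpos_of_mem_zsmul h hn0 hn))))
  · obtain ⟨m, rfl⟩ : ∃ m : ℕ, n = (m + 1 : ℕ) := ⟨n.toNat - 1, by omega⟩
    refine Set.mem_iUnion.2 ⟨(m + 2 : ℕ), ?_⟩
    rw [zsmul_natCast] at hn ⊢
    exact ⟨g, hn, l, hl, by rwa [add_comm]⟩

end Cut

namespace VData

variable {K : Type u} {G : Type v} [Field K] [AddCommGroup G] [LinearOrder G] [IsOrderedAddMonoid G]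
  (S : VData K G)

theorem ne_zero_of_v_eq_coe {x : K} {γ : G} (h : S.v x = γ) : x ≠ 0 :=
  fun hx => WithTop.top_ne_coe (((S.v_eq_top x).2 hx).symm.trans h)

theorem exists_v_eq_coe {x : K} (hx : x ≠ 0) : ∃ γ : G, S.v x = γ :=
  (WithTop.ne_top_iff_exists.1 (mt (S.v_eq_top x).1 hx)).imp fun _ h => h.symm

theorem mem_Oc_of_v_eq {x y : K} {Λ : Cut G} (hxy : S.v x = S.v y) (hy : y ∈ S.Oc Λ) :
    x ∈ S.Oc Λ :=
  fun γ hγ => hy γ (hxy ▸ hγ)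

theorem mem_Oc_of_v_eq_coe {x : K} {γ : G} {Λ : Cut G} (hx : S.v x = γ) (hγ : γ ∉ Λ.L) :
    x ∈ S.Oc Λ := by
  intro δ hδ
  rwa [WithTop.coe_injective (hδ.symm.trans hx)]

theorem t_zero_mul_self : S.t 0 * S.t 0 = 1 := by
  conv_lhs => arg 2; rw [← neg_zero, S.t_neg]
  exact mul_inv_cancel₀ (S.ne_zero_of_v_eq_coe (S.v_t 0))

theorem t_zero_mem_k : S.t 0 ∈ S.k := by
  rcases mul_self_eq_one_iff.1 S.t_zero_mul_self with h | h <;> rw [h]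
  · exact S.k.one_mem
  · exact S.k.neg_mem S.k.one_mem

end VData

namespace TowerBase

variable {K : Type u} {G : Type v} [Field K] [AddCommGroup G] [LinearOrder G] [IsOrderedAddMonoid G]
  {S : VData K G} (T : TowerBase S)

theorem sub_mem {Λ : Cut G} {x y : K} (hx : x ∈ T.A Λ) (hy : y ∈ T.A Λ) : x - y ∈ T.A Λ := by
  rw [sub_eq_add_neg, neg_eq_neg_one_mul]
  exact T.add_mem Λ x hx _ (T.smul_mem Λ (-1) (S.k.neg_mem S.k.one_mem) y hy)

theorem one_mem_A : (1 : K) ∈ T.A (Cut.rcut 0) := by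
  simpa [S.t_zero_mul_self] using T.sec_mem 0 _ S.t_zero_mem_k

theorem mem_A_of_forall_sub_mem_Oc {Λ : Cut G} {x : K}
    (h : ∀ b ∈ T.A Λ, x - b ∈ S.Oc Λ → x - b = 0) : x ∈ T.A Λ := by
  obtain ⟨b, hb, o, ho, rfl⟩ := T.spans Λ x
  have ho0 : o = 0 := by simpa using h b hb (by simpa using ho)
  simpa [ho0] using hb

theorem v_mem_L_of_mem_A {Λ : Cut G} {x : K} {γ : G} (hx : x ∈ T.A Λ) (hv : S.v x = γ) :
    γ ∈ Λ.L := by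
  by_contra hγ
  exact S.ne_zero_of_v_eq_coe hv (T.disj Λ x hx (S.mem_Oc_of_v_eq_coe hv hγ))

theorem mem_muInf_L_of_v_eq {x : K} {γ : G} (hv : S.v x = γ) : γ ∈ (T.muInf x).L :=
  fun _ hΓ => T.v_mem_L_of_mem_A hΓ hv

theorem muInf_le_of_mem {Λ : Cut G} {x : K} (h : x ∈ T.A Λ) : T.muInf x ≤ Λ :=
  Cut.inf_le h

theorem mem_A_muInf (x : K) : x ∈ T.A (T.muInf x) := by
  refine T.mem_A_of_forall_sub_mem_Oc fun b hb hxb => ?_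
  by_contra hne
  obtain ⟨d, hd⟩ := S.exists_v_eq_coe hne
  refine hxb d hd fun Γ hxΓ => T.v_mem_L_of_mem_A (T.sub_mem hxΓ ?_) hd
  exact (T.mono _ _).1 (T.muInf_le_of_mem hxΓ) hb

theorem inv_mem_A_of_mul_mem {a : K} (hva : S.v a = (0 : WithTop G)) {M : Cut G}
    (h1 : (1 : K) ∈ T.A M) (hmul : ∀ b ∈ T.A M, a * b ∈ T.A M) : a⁻¹ ∈ T.A M := by
  have ha : a ≠ 0 := S.ne_zero_of_v_eq_coe hva
  refine T.mem_A_of_forall_sub_mem_Oc fun b hb hε => ?_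
  have hεA : a * (a⁻¹ - b) ∈ T.A M := by
    rw [mul_sub, mul_inv_cancel₀ ha]
    exact T.sub_mem h1 (hmul b hb)
  have hεO : a * (a⁻¹ - b) ∈ S.Oc M :=
    S.mem_Oc_of_v_eq (by rw [S.v_mul, hva, zero_add]) hε
  exact (mul_eq_zero.1 (T.disj M _ hεA hεO)).resolve_left ha

end TowerBase

theorem inverse_mem_zmul_general {K : Type u} {G : Type v}
    [Field K] [AddCommGroup G] [LinearOrder G] [IsOrderedAddMonoid G]
    (S : VData K G) (T : Tower S) (a : K)
    (hva : S.v a = (0 : WithTop G)) :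
    T.toTowerBase.muInf a⁻¹ ≤ Cut.zmul (T.toTowerBase.muInf a) ∧
    a⁻¹ ∈ T.A (Cut.zmul (T.toTowerBase.muInf a)) := by
  set Λ := T.toTowerBase.muInf a
  have h0 : (0 : G) ∈ Λ.L := T.mem_muInf_L_of_v_eq hva
  have hinv : a⁻¹ ∈ T.A (Cut.zmul Λ) := by
    refine T.inv_mem_A_of_mul_mem hva ?_ fun b hb => ?_
    · exact (T.mono _ _).1 ((Cut.rcut_le_of_mem h0).trans (Cut.le_zmul Λ)) T.one_mem_A
    · exact (T.mono _ _).1 (Cut.add_zmul_le h0) (T.mul_mem _ _ a (T.mem_A_muInf a) b hb)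
  exact ⟨T.muInf_le_of_mem hinv, hinv⟩

/-- Let `K` be a valued field with a tower of complements `(A[Λ])`,
and let `a ∈ K` with `v(a) = 0`, `a ≠ 0`.  Set `Λ := ℤ·μ(a) = sup_n n·μ(a)`.
Then `μ(1/a) ≤ Λ`, i.e. `1/a ∈ A[Λ]`. -/
theorem inverse_mem_zmul {K : Type u} {G : Type v}
    [Field K] [AddCommGroup G] [LinearOrder G] [IsOrderedAddMonoid G]
    (S : VData K G) (T : Tower S) (a : K) (ha : a ≠ 0)
    (hva : S.v a = (0 : WithTop G)) :
    T.toTowerBase.muInf a⁻¹ ≤ Cut.zmul (T.toTowerBase.muInf a) ∧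
    a⁻¹ ∈ T.A (Cut.zmul (T.toTowerBase.muInf a)) :=
  inverse_mem_zmul_general S T a hva
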